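/- arXiv:1512.00508 — 3 statements merged into one kernel-verified Lean document; each statement's English description precedes it below -/
import Mathlib

section
/- With the product x^α ⋆ x^β = (-1)^{χ(α,β)} x^{α+β} on C[Δ], the bracket {x^α, x^β} := (-1)^{χ(α,β)} χ(α,β) x^{α+β} is antisymmetric and satisfies the Jacobi identity, making C[Δ] a Poisson algebra (the bracket is a biderivation with respect to the product). -/
/-!
Both products are instances of the bilinear map `monomialBilin c` on `Δ →₀ R` sending
`x^α, x^β` to `c α β • x^{α+β}`. By bilinearity every identity reduces to monomials, where it
becomes an identity between structure constants: the bracket is antisymmetric because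
`c β α = -c α β`, and both the Leibniz rule and the Jacobi identity (the latter after using
antisymmetry) say that `{f, -}` is a derivation of a product `monomialBilin d`, which on
monomials reads `c α (β+γ) d β γ = d (α+β) γ c α β + d β (α+γ) c α γ`. For `d = (-1)^χ` and
`c = (-1)^χ χ` this follows from biadditivity and skew-symmetry of `χ`, which make `(-1)^χ` a
symmetric bicharacter.
-/

/-- The twisted product on `ℂ[Δ]` determined on basis elements by
`x^α ⋆ x^β = (-1)^{χ(α,β)} x^{α+β}`. -/
noncomputable def twistedMul {Δ : Type*} [AddCommMonoid Δ] (χ : Δ → Δ → ℤ)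
    (f g : Δ →₀ ℂ) : Δ →₀ ℂ :=
  f.sum fun α a => g.sum fun β b =>
    Finsupp.single (α + β) (((-1 : ℂ) ^ (χ α β)) * a * b)

/-- The Poisson bracket on `ℂ[Δ]` determined on basis elements by
`{x^α, x^β} = (-1)^{χ(α,β)} χ(α,β) x^{α+β}`. -/
noncomputable def twistedBracket {Δ : Type*} [AddCommMonoid Δ] (χ : Δ → Δ → ℤ)
    (f g : Δ →₀ ℂ) : Δ →₀ ℂ :=
  f.sum fun α a => g.sum fun β b =>
    Finsupp.single (α + β) (((-1 : ℂ) ^ (χ α β)) * (χ α β : ℂ) * a * b)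

namespace Finsupp

section Semiring

variable {Δ R : Type*} [CommSemiring R]

noncomputable def monomialBilin [Add Δ] (c : Δ → Δ → R) :
    (Δ →₀ R) →ₗ[R] (Δ →₀ R) →ₗ[R] Δ →₀ R :=
  linearCombination R fun α => linearCombination R fun β => single (α + β) (c α β)

theorem monomialBilin_apply [Add Δ] (c : Δ → Δ → R) (f g : Δ →₀ R) :
    monomialBilin c f g =
      f.sum fun α a => g.sum fun β b => single (α + β) (c α β * a * b) := by
  simp only [monomialBilin, linearCombination_apply, LinearMap.finsupp_sum_apply,
    LinearMap.smul_apply, smul_sum, smul_single, smul_eq_mul]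
  refine sum_congr fun α _ => sum_congr fun β _ => ?_
  ring_nf

theorem monomialBilin_single [Add Δ] (c : Δ → Δ → R) (α β : Δ) (a b : R) :
    monomialBilin c (single α a) (single β b) = single (α + β) (c α β * a * b) := by
  simp [monomialBilin_apply]

theorem monomialBilin_leibniz [AddCommSemigroup Δ] {c d : Δ → Δ → R}
    (hcd : ∀ α β γ, c α (β + γ) * d β γ = d (α + β) γ * c α β + d β (α + γ) * c α γ)
    (f g h : Δ →₀ R) :
    monomialBilin c f (monomialBilin d g h) =
      monomialBilin d (monomialBilin c f g) h + monomialBilin d g (monomialBilin c f h) := by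
  induction f using induction_linear with
  | zero => simp
  | add f₁ f₂ h₁ h₂ => simp only [map_add, LinearMap.add_apply, h₁, h₂]; abel
  | single α a =>
    set D := monomialBilin c (single α a)
    suffices (monomialBilin d).compr₂ D = monomialBilin d ∘ₗ D + (monomialBilin d).compl₂ D from
      LinearMap.congr_fun₂ this g h
    refine lhom_ext fun β b => lhom_ext fun γ e => ?_
    simp only [D, LinearMap.compr₂_apply, LinearMap.add_apply, LinearMap.coe_comp,
      Function.comp_apply, LinearMap.compl₂_apply, monomialBilin_single]
    rw [add_assoc, add_left_comm β, ← add_assoc, ← single_add]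
    congr 1
    calc _ = c α (β + γ) * d β γ * (a * b * e) := by ring
      _ = _ := by rw [hcd]; ring

end Semiring

theorem monomialBilin_swap {Δ R : Type*} [CommRing R] [AddCommMagma Δ] {c : Δ → Δ → R}
    (hc : ∀ α β, c β α = -c α β) (f g : Δ →₀ R) :
    monomialBilin c g f = -monomialBilin c f g := by
  induction f using induction_linear with
  | zero => simp
  | add f₁ f₂ h₁ h₂ => simp only [map_add, LinearMap.add_apply, h₁, h₂, neg_add]
  | single α a =>
    suffices (monomialBilin c).flip (single α a) = -monomialBilin c (single α a) from
      LinearMap.congr_fun this g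
    refine lhom_ext fun β b => ?_
    rw [LinearMap.flip_apply, LinearMap.neg_apply, monomialBilin_single, monomialBilin_single,
      hc, add_comm β α, ← single_neg]
    congr 1
    ring

end Finsupp

open Finsupp

section Twisted

variable {Δ : Type*} (χ : Δ → Δ → ℤ)

noncomputable def twistSign (α β : Δ) : ℂ := (-1) ^ χ α β

noncomputable def bracketCoeff (α β : Δ) : ℂ := twistSign χ α β * χ α β

theorem twistedMul_eq_monomialBilin [AddCommMonoid Δ] (f g : Δ →₀ ℂ) :
    twistedMul χ f g = monomialBilin (twistSign χ) f g :=
  (monomialBilin_apply _ f g).symm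

theorem twistedBracket_eq_monomialBilin [AddCommMonoid Δ] (f g : Δ →₀ ℂ) :
    twistedBracket χ f g = monomialBilin (bracketCoeff χ) f g :=
  (monomialBilin_apply _ f g).symm

variable {χ}

theorem twistSign_add_left [Add Δ] (hadd : ∀ α β γ, χ (α + β) γ = χ α γ + χ β γ)
    (α β γ : Δ) : twistSign χ (α + β) γ = twistSign χ α γ * twistSign χ β γ := by
  rw [twistSign, hadd, zpow_add₀ (by norm_num)]; rfl

theorem twistSign_add_right [Add Δ] (hadd : ∀ α β γ, χ α (β + γ) = χ α β + χ α γ)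
    (α β γ : Δ) : twistSign χ α (β + γ) = twistSign χ α β * twistSign χ α γ := by
  rw [twistSign, hadd, zpow_add₀ (by norm_num)]; rfl

theorem twistSign_comm (hskew : ∀ α β, χ α β = -χ β α) (α β : Δ) :
    twistSign χ α β = twistSign χ β α := by
  rw [twistSign, hskew, ← inv_zpow', inv_neg_one]; rfl

theorem bracketCoeff_swap (hskew : ∀ α β, χ α β = -χ β α) (α β : Δ) :
    bracketCoeff χ β α = -bracketCoeff χ α β := by
  rw [bracketCoeff, bracketCoeff, twistSign_comm hskew, hskew]
  push_cast
  ring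

theorem bracketCoeff_leibniz_twistSign [Add Δ]
    (hadd_left : ∀ α β γ, χ (α + β) γ = χ α γ + χ β γ)
    (hadd_right : ∀ α β γ, χ α (β + γ) = χ α β + χ α γ) (hskew : ∀ α β, χ α β = -χ β α)
    (α β γ : Δ) :
    bracketCoeff χ α (β + γ) * twistSign χ β γ =
      twistSign χ (α + β) γ * bracketCoeff χ α β +
        twistSign χ β (α + γ) * bracketCoeff χ α γ := by
  simp only [bracketCoeff, twistSign_add_left hadd_left, twistSign_add_right hadd_right,
    hadd_right, twistSign_comm hskew β α]
  push_cast
  ring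

theorem bracketCoeff_leibniz_bracketCoeff [Add Δ]
    (hadd_left : ∀ α β γ, χ (α + β) γ = χ α γ + χ β γ)
    (hadd_right : ∀ α β γ, χ α (β + γ) = χ α β + χ α γ) (hskew : ∀ α β, χ α β = -χ β α)
    (α β γ : Δ) :
    bracketCoeff χ α (β + γ) * bracketCoeff χ β γ =
      bracketCoeff χ (α + β) γ * bracketCoeff χ α β +
        bracketCoeff χ β (α + γ) * bracketCoeff χ α γ := by
  simp only [bracketCoeff, twistSign_add_left hadd_left, twistSign_add_right hadd_right,
    hadd_left, hadd_right, twistSign_comm hskew β α, hskew β α]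
  push_cast
  ring

end Twisted

/-- With the product `x^α ⋆ x^β = (-1)^{χ(α,β)} x^{α+β}` on `ℂ[Δ]`, the bracket
`{x^α, x^β} = (-1)^{χ(α,β)} χ(α,β) x^{α+β}` is antisymmetric, satisfies the Jacobi
identity, and is a biderivation with respect to the product, making `ℂ[Δ]` a
Poisson algebra. -/
theorem twistedBracket_poisson {Δ : Type*} [AddCommMonoid Δ] (χ : Δ → Δ → ℤ)
    (hadd_left : ∀ α β γ, χ (α + β) γ = χ α γ + χ β γ)
    (hadd_right : ∀ α β γ, χ α (β + γ) = χ α β + χ α γ)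
    (hskew : ∀ α β, χ α β = - χ β α) :
    (∀ f g : Δ →₀ ℂ, twistedBracket χ f g = - twistedBracket χ g f) ∧
    (∀ f g h : Δ →₀ ℂ,
      twistedBracket χ f (twistedBracket χ g h) +
        twistedBracket χ g (twistedBracket χ h f) +
        twistedBracket χ h (twistedBracket χ f g) = 0) ∧
    (∀ f g h : Δ →₀ ℂ,
      twistedBracket χ f (twistedMul χ g h) =
        twistedMul χ (twistedBracket χ f g) h + twistedMul χ g (twistedBracket χ f h)) := by
  have swap := monomialBilin_swap (bracketCoeff_swap hskew)
  simp only [twistedMul_eq_monomialBilin, twistedBracket_eq_monomialBilin]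
  refine ⟨fun f g => swap g f, fun f g h => ?_, fun f g h => ?_⟩
  · rw [monomialBilin_leibniz (bracketCoeff_leibniz_bracketCoeff hadd_left hadd_right hskew),
      swap h f, map_neg, swap h]
    abel
  · exact monomialBilin_leibniz (bracketCoeff_leibniz_twistSign hadd_left hadd_right hskew) f g h
end

section
/- For an orbifold flop of type (a₀,a₁; b₀,b₁) with the Calabi–Yau condition a₀+a₁=b₀+b₁, both sides satisfy the Hard Lefschetz condition if and only if {a₀,a₁} = {b₀,b₁} as multisets. -/
/-- The age of the element `ζ^k` of `μ_n` acting on `ℂ³` with weights `w`: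
`age(ζ^k) = Σ_i frac(k wᵢ / n)`. -/
noncomputable def orbAge (n : ℕ) (k : ℤ) (w : Fin 3 → ℤ) : ℚ :=
  ∑ i, Int.fract (((k * w i : ℤ) : ℚ) / (n : ℚ))

/-- The Hard Lefschetz condition for the cyclic group `μ_n` acting on `ℂ³` with
weights `w`: `age(v) = age(v⁻¹)` for every group element `v = ζ^k`. -/
def HLCondition (n : ℕ) (w : Fin 3 → ℤ) : Prop :=
  ∀ k : ℤ, orbAge n k w = orbAge n (-k) w

private lemma fractZeroOfDvd {n : ℕ} {w : ℤ} (h : (n:ℤ) ∣ w) :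
    Int.fract ((w : ℚ) / (n : ℚ)) = 0 := by
  rcases Nat.eq_zero_or_pos n with hn | hn
  · simp [hn]
  · obtain ⟨m, rfl⟩ := h
    have hn' : (n:ℚ) ≠ 0 := by positivity
    rw [Int.cast_mul]
    push_cast
    rw [mul_div_cancel_left₀ _ hn']
    exact Int.fract_intCast m

private lemma fractNeZero {n : ℕ} (hn : 0 < n) {x : ℤ} (hx : ¬ (n:ℤ) ∣ x) :
    Int.fract ((x:ℚ)/(n:ℚ)) ≠ 0 := by
  intro h
  apply hx
  have hn' : (n:ℚ) ≠ 0 := by positivity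
  have h2 : (x:ℚ)/(n:ℚ) = (⌊(x:ℚ)/(n:ℚ)⌋ : ℚ) := by
    have h3 := Int.self_sub_floor ((x:ℚ)/(n:ℚ))
    rw [h] at h3; linarith
  refine ⟨⌊(x:ℚ)/(n:ℚ)⌋, ?_⟩
  have : (x:ℚ) = n * (⌊(x:ℚ)/(n:ℚ)⌋ : ℚ) := by
    rw [← h2]; field_simp
  exact_mod_cast this

private lemma hlKey {n : ℕ} (hn : 0 < n) {x y z : ℤ}
    (hsum : (n:ℤ) ∣ (x - y - z)) (h : HLCondition n ![x, -y, -z]) :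
    (n:ℤ) ∣ x ∨ (n:ℤ) ∣ y ∨ (n:ℤ) ∣ z := by
  by_contra hc
  push_neg at hc
  obtain ⟨hx, hy, hz⟩ := hc
  have h1 := h 1
  simp only [orbAge, Fin.sum_univ_three, Matrix.cons_val_zero, Matrix.cons_val_one,
    Matrix.head_cons, Matrix.cons_val_two, Matrix.tail_cons, one_mul, neg_mul,
    neg_one_mul, mul_neg] at h1
  push_cast at h1
  simp only [neg_neg] at h1
  have fx := fractNeZero hn hx
  have fy := fractNeZero hn hy
  have fz := fractNeZero hn hz
  have nx : Int.fract (-((x:ℚ)/(n:ℚ))) = 1 - Int.fract ((x:ℚ)/(n:ℚ)) := Int.fract_neg fx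
  have ny : Int.fract (-((y:ℚ)/(n:ℚ))) = 1 - Int.fract ((y:ℚ)/(n:ℚ)) := Int.fract_neg fy
  have nz : Int.fract (-((z:ℚ)/(n:ℚ))) = 1 - Int.fract ((z:ℚ)/(n:ℚ)) := Int.fract_neg fz
  rw [show (-(x:ℚ))/(n:ℚ) = -((x:ℚ)/(n:ℚ)) by ring, show (-(y:ℚ))/(n:ℚ) = -((y:ℚ)/(n:ℚ)) by ring,
    show (-(z:ℚ))/(n:ℚ) = -((z:ℚ)/(n:ℚ)) by ring, nx, ny, nz] at h1
  obtain ⟨m, hm⟩ := hsum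
  have hn' : (n:ℚ) ≠ 0 := by positivity
  have hmq : (x:ℚ)/(n:ℚ) - (y:ℚ)/(n:ℚ) - (z:ℚ)/(n:ℚ) = (m:ℚ) := by
    have : (x:ℚ) - y - z = n * m := by exact_mod_cast hm
    field_simp
    linarith
  set fX := Int.fract ((x:ℚ)/(n:ℚ)) with hfX
  set fY := Int.fract ((y:ℚ)/(n:ℚ)) with hfY
  set fZ := Int.fract ((z:ℚ)/(n:ℚ)) with hfZ
  have key : fX - fY - fZ = -(1/2 : ℚ) := by linarith
  have e1 : fX = (x:ℚ)/(n:ℚ) - (⌊(x:ℚ)/(n:ℚ)⌋:ℚ) := (Int.self_sub_floor _).symm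
  have e2 : fY = (y:ℚ)/(n:ℚ) - (⌊(y:ℚ)/(n:ℚ)⌋:ℚ) := (Int.self_sub_floor _).symm
  have e3 : fZ = (z:ℚ)/(n:ℚ) - (⌊(z:ℚ)/(n:ℚ)⌋:ℚ) := (Int.self_sub_floor _).symm
  have : ((m - ⌊(x:ℚ)/(n:ℚ)⌋ + ⌊(y:ℚ)/(n:ℚ)⌋ + ⌊(z:ℚ)/(n:ℚ)⌋ : ℤ) : ℚ) = -(1/2 : ℚ) := by
    push_cast
    linarith
  have h2 : (2 * (m - ⌊(x:ℚ)/(n:ℚ)⌋ + ⌊(y:ℚ)/(n:ℚ)⌋ + ⌊(z:ℚ)/(n:ℚ)⌋ : ℤ) : ℚ) = -1 := by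
    push_cast at this ⊢
    linarith
  have h3 : 2 * (m - ⌊(x:ℚ)/(n:ℚ)⌋ + ⌊(y:ℚ)/(n:ℚ)⌋ + ⌊(z:ℚ)/(n:ℚ)⌋ : ℤ) = -1 := by
    exact_mod_cast h2
  omega

private lemma hlEasy1 {n : ℕ} {x y : ℤ} (hy : (n:ℤ) ∣ y) :
    HLCondition n ![x, -y, -x] := by
  intro k
  have h1 : ∀ j : ℤ, Int.fract (((j * -y : ℤ) : ℚ) / (n:ℚ)) = 0 := fun j =>
    fractZeroOfDvd (Dvd.dvd.mul_left (dvd_neg.mpr hy) j)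
  simp only [orbAge, Fin.sum_univ_three, Matrix.cons_val_zero, Matrix.cons_val_one,
    Matrix.head_cons, Matrix.cons_val_two, Matrix.tail_cons, h1]
  have h2 : ((-k * x : ℤ) : ℚ) = ((k * -x : ℤ) : ℚ) := by push_cast; ring
  have h3 : ((-k * -x : ℤ) : ℚ) = ((k * x : ℤ) : ℚ) := by push_cast; ring
  rw [h2, h3]
  ring

private lemma hlEasy2 {n : ℕ} {x z : ℤ} (hz : (n:ℤ) ∣ z) :
    HLCondition n ![x, -x, -z] := by
  intro k
  have h1 : ∀ j : ℤ, Int.fract (((j * -z : ℤ) : ℚ) / (n:ℚ)) = 0 := fun j =>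
    fractZeroOfDvd (Dvd.dvd.mul_left (dvd_neg.mpr hz) j)
  simp only [orbAge, Fin.sum_univ_three, Matrix.cons_val_zero, Matrix.cons_val_one,
    Matrix.head_cons, Matrix.cons_val_two, Matrix.tail_cons, h1]
  have h2 : ((-k * x : ℤ) : ℚ) = ((k * -x : ℤ) : ℚ) := by push_cast; ring
  have h3 : ((-k * -x : ℤ) : ℚ) = ((k * x : ℤ) : ℚ) := by push_cast; ring
  rw [h2, h3]
  ring

private lemma solveMax (a₀ a₁ b₀ b₁ : ℕ) (ha₁ : 0 < a₁) (hb₀ : 0 < b₀) (hb₁ : 0 < b₁)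
    (h1 : a₁ ≤ a₀) (h2 : b₀ ≤ a₀) (h3 : b₁ ≤ a₀) (hCY : a₀ + a₁ = b₀ + b₁)
    (D : a₀ ∣ a₁ ∨ a₀ ∣ b₀ ∨ a₀ ∣ b₁) :
    (a₀ = b₀ ∧ a₁ = b₁) ∨ (a₀ = b₁ ∧ a₁ = b₀) := by
  rcases D with h | h | h
  · have := Nat.le_of_dvd ha₁ h; omega
  · have := Nat.le_of_dvd hb₀ h; omega
  · have := Nat.le_of_dvd hb₁ h; omega

/-- For an orbifold flop of type `(a₀,a₁; b₀,b₁)` with the Calabi–Yau condition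
`a₀+a₁ = b₀+b₁`, both sides satisfy the Hard Lefschetz condition — i.e.
`age(v) = age(v⁻¹)` for all elements of each local cyclic stabilizer group
(stabilizers `μ_{a₀}, μ_{a₁}` on `X` with tangent weights `(a₁, -b₀, -b₁)`,
`(a₀, -b₀, -b₁)`, and `μ_{b₀}, μ_{b₁}` on `X'` with tangent weights
`(b₁, -a₀, -a₁)`, `(b₀, -a₀, -a₁)`) — if and only if `{a₀,a₁} = {b₀,b₁}`
as multisets. -/
theorem orbifold_flop_hard_lefschetz_iff (a₀ a₁ b₀ b₁ : ℕ)
    (ha₀ : 0 < a₀) (ha₁ : 0 < a₁) (hb₀ : 0 < b₀) (hb₁ : 0 < b₁)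
    (hCY : a₀ + a₁ = b₀ + b₁) :
    (HLCondition a₀ ![(a₁ : ℤ), -(b₀ : ℤ), -(b₁ : ℤ)] ∧
     HLCondition a₁ ![(a₀ : ℤ), -(b₀ : ℤ), -(b₁ : ℤ)] ∧
     HLCondition b₀ ![(b₁ : ℤ), -(a₀ : ℤ), -(a₁ : ℤ)] ∧
     HLCondition b₁ ![(b₀ : ℤ), -(a₀ : ℤ), -(a₁ : ℤ)]) ↔
    ({a₀, a₁} : Multiset ℕ) = ({b₀, b₁} : Multiset ℕ) := by
  have hz : (a₀:ℤ) + a₁ = b₀ + b₁ := by exact_mod_cast hCY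
  constructor
  · rintro ⟨H0, H1, H2, H3⟩
    have D0 : a₀ ∣ a₁ ∨ a₀ ∣ b₀ ∨ a₀ ∣ b₁ := by
      rcases hlKey ha₀ ⟨-1, by linarith⟩ H0 with h' | h' | h'
      · exact Or.inl (by exact_mod_cast h')
      · exact Or.inr (Or.inl (by exact_mod_cast h'))
      · exact Or.inr (Or.inr (by exact_mod_cast h'))
    have D1 : a₁ ∣ a₀ ∨ a₁ ∣ b₀ ∨ a₁ ∣ b₁ := by
      rcases hlKey ha₁ ⟨-1, by linarith⟩ H1 with h' | h' | h'
      · exact Or.inl (by exact_mod_cast h')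
      · exact Or.inr (Or.inl (by exact_mod_cast h'))
      · exact Or.inr (Or.inr (by exact_mod_cast h'))
    have D2 : b₀ ∣ b₁ ∨ b₀ ∣ a₀ ∨ b₀ ∣ a₁ := by
      rcases hlKey hb₀ ⟨-1, by linarith⟩ H2 with h' | h' | h'
      · exact Or.inl (by exact_mod_cast h')
      · exact Or.inr (Or.inl (by exact_mod_cast h'))
      · exact Or.inr (Or.inr (by exact_mod_cast h'))
    have D3 : b₁ ∣ b₀ ∨ b₁ ∣ a₀ ∨ b₁ ∣ a₁ := by
      rcases hlKey hb₁ ⟨-1, by linarith⟩ H3 with h' | h' | h'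
      · exact Or.inl (by exact_mod_cast h')
      · exact Or.inr (Or.inl (by exact_mod_cast h'))
      · exact Or.inr (Or.inr (by exact_mod_cast h'))
    have main : (a₀ = b₀ ∧ a₁ = b₁) ∨ (a₀ = b₁ ∧ a₁ = b₀) := by
      by_cases K0 : a₁ ≤ a₀ ∧ b₀ ≤ a₀ ∧ b₁ ≤ a₀
      · exact solveMax a₀ a₁ b₀ b₁ ha₁ hb₀ hb₁ K0.1 K0.2.1 K0.2.2 hCY D0
      by_cases K1 : a₀ ≤ a₁ ∧ b₀ ≤ a₁ ∧ b₁ ≤ a₁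
      · have := solveMax a₁ a₀ b₀ b₁ ha₀ hb₀ hb₁ K1.1 K1.2.1 K1.2.2 (by omega) D1
        omega
      by_cases K2 : b₁ ≤ b₀ ∧ a₀ ≤ b₀ ∧ a₁ ≤ b₀
      · have := solveMax b₀ b₁ a₀ a₁ hb₁ ha₀ ha₁ K2.1 K2.2.1 K2.2.2 (by omega) D2
        omega
      · have K3 : b₀ ≤ b₁ ∧ a₀ ≤ b₁ ∧ a₁ ≤ b₁ := by omega
        have := solveMax b₁ b₀ a₀ a₁ hb₀ ha₀ ha₁ K3.1 K3.2.1 K3.2.2 (by omega) D3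
        omega
    rcases main with ⟨h1, h2⟩ | ⟨h1, h2⟩
    · subst h1; subst h2; rfl
    · subst h1; subst h2; exact Multiset.pair_comm _ _
  · intro h
    have hmem : a₀ ∈ ({b₀, b₁} : Multiset ℕ) := by
      rw [← h]; simp
    simp only [Multiset.insert_eq_cons, Multiset.mem_cons, Multiset.mem_singleton] at hmem
    rcases hmem with h1 | h1
    · have h2 : a₁ = b₁ := by omega
      subst h1; subst h2
      exact ⟨hlEasy1 dvd_rfl, hlEasy2 dvd_rfl, hlEasy1 dvd_rfl, hlEasy2 dvd_rfl⟩
    · have h2 : a₁ = b₀ := by omega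
      subst h1; subst h2
      exact ⟨hlEasy2 dvd_rfl, hlEasy1 dvd_rfl, hlEasy2 dvd_rfl, hlEasy1 dvd_rfl⟩
end

section
/- Let A be an abelian category and (T, F) a torsion pair. The tilted heart A# = {E ∈ D^b(A) | H⁰(E) ∈ F, H^{-1}(E) ∈ T, H^i(E)=0 for i ∉ {-1,0}} is closed under extensions in D^b(A). -/
open CategoryTheory Pretriangulated Limits

/-- Membership in the tilted heart `A#` associated to a torsion pair `(𝒯, 𝓕)`:
`E ∈ A#` iff `H⁰(E) ∈ 𝓕`, `H^{-1}(E) ∈ 𝒯`, and `H^i(E) = 0` for `i ∉ {-1, 0}`. -/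
noncomputable def tiltedHeart {A : Type*} [Category A] [Abelian A]
    [HasDerivedCategory A] (𝒯 𝓕 : A → Prop) (E : DerivedCategory A) : Prop :=
  𝓕 ((DerivedCategory.homologyFunctor A 0).obj E) ∧
  𝒯 ((DerivedCategory.homologyFunctor A (-1)).obj E) ∧
  ∀ i : ℤ, i ≠ 0 → i ≠ -1 → IsZero ((DerivedCategory.homologyFunctor A i).obj E)

/-- A torsion class is closed under extensions. -/
lemma torsion_ext {A : Type*} [Category A] [Abelian A] (𝒯 𝓕 : A → Prop)
    (h𝒯iso : ∀ X Y : A, (X ≅ Y) → 𝒯 X → 𝒯 Y)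
    (hhom : ∀ T F : A, 𝒯 T → 𝓕 F → ∀ f : T ⟶ F, f = 0)
    (hses : ∀ E : A, ∃ (T F : A) (_ : 𝒯 T) (_ : 𝓕 F) (i : T ⟶ E) (p : E ⟶ F)
      (w : i ≫ p = 0), (ShortComplex.mk i p w).ShortExact)
    (S : ShortComplex A) (hex : S.Exact) (hm : Mono S.f) (he : Epi S.g)
    (h1 : 𝒯 S.X₁) (h3 : 𝒯 S.X₃) : 𝒯 S.X₂ := by
  haveI := hm; haveI := he
  obtain ⟨T, F, hT, hF, i, p, w, hSE⟩ := hses S.X₂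
  have hfp : S.f ≫ p = 0 := hhom _ _ h1 hF _
  have hq : S.g ≫ hex.desc p hfp = p := hex.g_desc p hfp
  have hq0 : hex.desc p hfp = 0 := hhom _ _ h3 hF _
  have hp0 : p = 0 := by rw [← hq, hq0, comp_zero]
  haveI : Mono i := hSE.mono_f
  haveI : Epi i := hSE.exact.epi_f hp0
  haveI : IsIso i := isIso_of_mono_of_epi i
  exact h𝒯iso T _ (asIso i) hT

/-- A torsion-free class is closed under extensions. -/
lemma torsionFree_ext {A : Type*} [Category A] [Abelian A] (𝒯 𝓕 : A → Prop)
    (h𝓕iso : ∀ X Y : A, (X ≅ Y) → 𝓕 X → 𝓕 Y)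
    (hhom : ∀ T F : A, 𝒯 T → 𝓕 F → ∀ f : T ⟶ F, f = 0)
    (hses : ∀ E : A, ∃ (T F : A) (_ : 𝒯 T) (_ : 𝓕 F) (i : T ⟶ E) (p : E ⟶ F)
      (w : i ≫ p = 0), (ShortComplex.mk i p w).ShortExact)
    (S : ShortComplex A) (hex : S.Exact) (hm : Mono S.f) (he : Epi S.g)
    (h1 : 𝓕 S.X₁) (h3 : 𝓕 S.X₃) : 𝓕 S.X₂ := by
  haveI := hm; haveI := he
  obtain ⟨T, F, hT, hF, i, p, w, hSE⟩ := hses S.X₂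
  have hig : i ≫ S.g = 0 := hhom _ _ hT h3 _
  have hi0 : i = 0 := by
    rw [← hex.lift_f i hig, hhom _ _ hT h1 (hex.lift i hig), zero_comp]
  haveI : Epi p := hSE.epi_g
  haveI : Mono p := hSE.exact.mono_g hi0
  haveI : IsIso p := isIso_of_mono_of_epi p
  exact h𝓕iso F _ (asIso p).symm hF

/-- Let `A` be an abelian category and `(𝒯, 𝓕)` a torsion pair. The tilted heart
`A# = {E ∈ D(A) | H⁰(E) ∈ 𝓕, H^{-1}(E) ∈ 𝒯, H^i(E) = 0 for i ∉ {-1,0}}` is closed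
under extensions: for any distinguished triangle `E₁ → E → E₂ → E₁[1]` with
`E₁, E₂ ∈ A#`, also `E ∈ A#`. -/
theorem tiltedHeart_closed_under_extensions {A : Type*} [Category A] [Abelian A]
    [HasDerivedCategory A] (𝒯 𝓕 : A → Prop)
    (h𝒯iso : ∀ X Y : A, (X ≅ Y) → 𝒯 X → 𝒯 Y)
    (h𝓕iso : ∀ X Y : A, (X ≅ Y) → 𝓕 X → 𝓕 Y)
    (hhom : ∀ T F : A, 𝒯 T → 𝓕 F → ∀ f : T ⟶ F, f = 0)
    (hses : ∀ E : A, ∃ (T F : A) (_ : 𝒯 T) (_ : 𝓕 F) (i : T ⟶ E) (p : E ⟶ F)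
      (w : i ≫ p = 0), (ShortComplex.mk i p w).ShortExact) :
    ∀ (Tr : Triangle (DerivedCategory A)), (Tr ∈ distTriang (DerivedCategory A)) →
      tiltedHeart 𝒯 𝓕 Tr.obj₁ → tiltedHeart 𝒯 𝓕 Tr.obj₃ →
      tiltedHeart 𝒯 𝓕 Tr.obj₂ := by
  intro Tr hTr h1 h3
  obtain ⟨hF1, hT1, hZ1⟩ := h1
  obtain ⟨hF3, hT3, hZ3⟩ := h3
  have hδ : DerivedCategory.HomologySequence.δ Tr (-1) 0 (by norm_num) = 0 :=
    hhom _ _ hT3 hF1 _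
  refine ⟨?_, ?_, ?_⟩
  · -- H⁰ is an extension of objects of 𝓕
    have hex := DerivedCategory.HomologySequence.exact₂ Tr hTr 0
    have hm : Mono ((DerivedCategory.homologyFunctor A 0).map Tr.mor₁) :=
      (DerivedCategory.HomologySequence.mono_homologyMap_mor₁_iff Tr hTr (-1) 0
        (by norm_num)).2 hδ
    have hδ' : DerivedCategory.HomologySequence.δ Tr 0 1 rfl = 0 :=
      (hZ1 1 (by norm_num) (by norm_num)).eq_of_tgt _ _
    have he : Epi ((DerivedCategory.homologyFunctor A 0).map Tr.mor₂) :=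
      (DerivedCategory.HomologySequence.epi_homologyMap_mor₂_iff Tr hTr 0 1 rfl).2 hδ'
    exact torsionFree_ext 𝒯 𝓕 h𝓕iso hhom hses _ hex hm he hF1 hF3
  · -- H^{-1} is an extension of objects of 𝒯
    have hex := DerivedCategory.HomologySequence.exact₂ Tr hTr (-1)
    have hδ'' : DerivedCategory.HomologySequence.δ Tr (-2) (-1) (by norm_num) = 0 :=
      (hZ3 (-2) (by norm_num) (by norm_num)).eq_of_src _ _
    have hm : Mono ((DerivedCategory.homologyFunctor A (-1)).map Tr.mor₁) :=
      (DerivedCategory.HomologySequence.mono_homologyMap_mor₁_iff Tr hTr (-2) (-1)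
        (by norm_num)).2 hδ''
    have he : Epi ((DerivedCategory.homologyFunctor A (-1)).map Tr.mor₂) :=
      (DerivedCategory.HomologySequence.epi_homologyMap_mor₂_iff Tr hTr (-1) 0
        (by norm_num)).2 hδ
    exact torsion_ext 𝒯 𝓕 h𝒯iso hhom hses _ hex hm he hT1 hT3
  · intro i hi hi'
    have hex := DerivedCategory.HomologySequence.exact₂ Tr hTr i
    exact hex.isZero_X₂ ((hZ1 i hi hi').eq_of_src _ _) ((hZ3 i hi hi').eq_of_tgt _ _)
end
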